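/- arXiv:1811.01800 — 3 statements merged into one kernel-verified Lean document; each statement's English description precedes it below -/
import Mathlib

section
/- For every graph G on the vertex set [n], the likelihood ratio satisfies L(G) = X_Γ(G) / E0[X_Γ], where E0[X_Γ] is the expected number of copies of Γ under ℙ0. -/
open scoped Classical BigOperators
open Filter

namespace PlantedStructures

/-- A graph on vertex set `[n]`. -/
abbrev Graph (n : ℕ) := SimpleGraph (Fin n)

/-- Number of edges of a graph on `[n]`. -/
noncomputable def edgeCount {n : ℕ} (G : Graph n) : ℕ := G.edgeSet.ncard

/-- The Erdős–Rényi probability `ℙ0(G)` of an individual graph `G` on `[n]`,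
with edge probability `p`. -/
noncomputable def P0 (n : ℕ) (p : ℝ) (G : Graph n) : ℝ :=
  p ^ edgeCount G * (1 - p) ^ (n.choose 2 - edgeCount G)

/-- Probability of an event under `ℙ0`. -/
noncomputable def Pr0 (n : ℕ) (p : ℝ) (A : Graph n → Prop) : ℝ :=
  ∑ G : Graph n, if A G then P0 n p G else 0

/-- Expectation of a functional of the graph under `ℙ0`. -/
noncomputable def E0 (n : ℕ) (p : ℝ) (f : Graph n → ℝ) : ℝ :=
  ∑ G : Graph n, P0 n p G * f G

/-- The probability `ℙ1(G)` of an individual graph `G` on `[n]` under the planted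
distribution: `G = G0 ⊔ σ(Γ)` where `G0 ~ G(n,p)` and `σ` is a uniformly random
injection of the vertices of `Γ` into `[n]`, independent of `G0`. -/
noncomputable def P1 (n : ℕ) (p : ℝ) {V : Type*} [Fintype V] (Γ : SimpleGraph V)
    (G : Graph n) : ℝ :=
  (∑ σ : V ↪ Fin n, ∑ G0 : Graph n, if G0 ⊔ Γ.map σ = G then P0 n p G0 else 0) /
    (Fintype.card (V ↪ Fin n) : ℝ)

/-- Probability of a joint event of the planted injection `σ` and the observed
graph `G = G0 ⊔ σ(Γ)`, under the planted distribution. -/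
noncomputable def PrJoint (n : ℕ) (p : ℝ) {V : Type*} [Fintype V] (Γ : SimpleGraph V)
    (A : (V ↪ Fin n) → Graph n → Prop) : ℝ :=
  (∑ σ : V ↪ Fin n, ∑ G0 : Graph n, if A σ (G0 ⊔ Γ.map σ) then P0 n p G0 else 0) /
    (Fintype.card (V ↪ Fin n) : ℝ)

/-- Probability of an event under the planted distribution `ℙ1`. -/
noncomputable def Pr1 (n : ℕ) (p : ℝ) {V : Type*} [Fintype V] (Γ : SimpleGraph V)
    (A : Graph n → Prop) : ℝ :=
  PrJoint n p Γ (fun _ G => A G)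

/-- The likelihood ratio `L(G) = ℙ1(G) / ℙ0(G)`. -/
noncomputable def LR (n : ℕ) (p : ℝ) {V : Type*} [Fintype V] (Γ : SimpleGraph V)
    (G : Graph n) : ℝ :=
  P1 n p Γ G / P0 n p G

/-- The number of copies of `Γ` in `G`, i.e. of subgraphs of `G` isomorphic to `Γ`. -/
noncomputable def numCopies {V : Type*} (Γ : SimpleGraph V) {n : ℕ} (G : Graph n) : ℕ :=
  Set.ncard {H : G.Subgraph | Nonempty (H.coe ≃g Γ)}

/-- Total variation distance between `ℙ1` and `ℙ0`. -/
noncomputable def dTV (n : ℕ) (p : ℝ) {V : Type*} [Fintype V] (Γ : SimpleGraph V) : ℝ :=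
  (∑ G : Graph n, |P1 n p Γ G - P0 n p G|) / 2

/-- The planted vertex set `𝒦 = σ([K])`. -/
noncomputable def plantedSet {n : ℕ} {V : Type*} [Fintype V] (σ : V ↪ Fin n) :
    Finset (Fin n) :=
  Finset.univ.map σ

/-- The overlap `ov(K̂) = Σ_{i ∈ [n]} ℙ1(i ∈ K̂(G) ∩ 𝒦)` of an estimator `K̂`. -/
noncomputable def overlap (n : ℕ) (p : ℝ) {V : Type*} [Fintype V] (Γ : SimpleGraph V)
    (kHat : Graph n → Finset (Fin n)) : ℝ :=
  (∑ σ : V ↪ Fin n, ∑ G0 : Graph n,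
      P0 n p G0 * ((kHat (G0 ⊔ Γ.map σ) ∩ plantedSet σ).card : ℝ)) /
    (Fintype.card (V ↪ Fin n) : ℝ)


/-- The star graph with `K` edges: vertex `0` is the center, joined to the `K` leaves. -/
def starGraph (K : ℕ) : SimpleGraph (Fin (K + 1)) :=
  SimpleGraph.fromRel (fun i _ => i = 0)

/-- `inPathEdge K u v` states that `{u, v}` is an edge of the fixed path
`(1 − 2 − ⋯ − K)` on the first `K` vertices of `[n]`. -/
def inPathEdge (K : ℕ) {n : ℕ} (u v : Fin n) : Prop :=
  u.val < K ∧ v.val < K ∧ (u.val + 1 = v.val ∨ v.val + 1 = u.val)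

/-- The number of ordered `K`-paths in `G`: ordered tuples of `K` distinct vertices
in which consecutive vertices are adjacent in `G`. -/
noncomputable def numOrderedPaths (n K : ℕ) (G : Graph n) : ℕ :=
  Set.ncard {f : Fin K ↪ Fin n |
    ∀ (i : ℕ) (h : i + 1 < K), G.Adj (f ⟨i, Nat.lt_of_succ_lt h⟩) (f ⟨i + 1, h⟩)}

/-- The number `S` of edges that the ordered `K`-path `f` has in common with the
fixed path `(1 − 2 − ⋯ − K)`. -/
noncomputable def commonEdges (n K : ℕ) (f : Fin K ↪ Fin n) : ℕ :=
  ((Finset.range K).filter (fun i =>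
    ∃ h : i + 1 < K, inPathEdge K (f ⟨i, Nat.lt_of_succ_lt h⟩) (f ⟨i + 1, h⟩))).card

/-- The number of indices `1 ≤ t ≤ m` with `Z_t = 1`, i.e. `Σ_{t=1}^m Z_t⁺`, for the
random path given by the injection `f`. -/
noncomputable def zPlusSum (n K m : ℕ) (f : Fin K ↪ Fin n) : ℕ :=
  ((Finset.range m).filter (fun i =>
    ∃ h : i + 1 < K, inPathEdge K (f ⟨i, Nat.lt_of_succ_lt h⟩) (f ⟨i + 1, h⟩))).card

/-- `z⁺` for the three states `−1, 0, 1` (encoded as `0, 1, 2 : Fin 3`). -/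
def statePlus : Fin 3 → ℕ := ![0, 0, 1]

/-- Initial distribution of the Markov chain `Z′`:
`ℙ(Z′_1 = 1) = (K/n′)(2/n′)`, `ℙ(Z′_1 ≥ 0) = K/n′`, where `n′ = n − K`. -/
noncomputable def chainInit (n K : ℕ) : Fin 3 → ℝ :=
  ![1 - K / ((n : ℝ) - K),
    K / ((n : ℝ) - K) - 2 * K / ((n : ℝ) - K) ^ 2,
    2 * K / ((n : ℝ) - K) ^ 2]

/-- Transition matrix of the Markov chain `Z′` on states `−1, 0, 1`. -/
noncomputable def chainTrans (n K : ℕ) : Fin 3 → Fin 3 → ℝ :=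
  ![![1 - K / ((n : ℝ) - K), K / ((n : ℝ) - K), 0],
    ![1 - K / ((n : ℝ) - K), ((K : ℝ) - 2) / ((n : ℝ) - K), 2 / ((n : ℝ) - K)],
    ![1 - K / ((n : ℝ) - K), ((K : ℝ) - 1) / ((n : ℝ) - K), 1 / ((n : ℝ) - K)]]

/-- `chainF n K x t s = E[x^{Σ_{u=1}^{t+1} Z′_u⁺} ⬝ 1{Z′_{t+1} = s}]`. -/
noncomputable def chainF (n K : ℕ) (x : ℝ) : ℕ → Fin 3 → ℝ
  | 0 => fun s => chainInit n K s * x ^ statePlus s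
  | (t + 1) => fun s =>
      (∑ s' : Fin 3, chainF n K x t s' * chainTrans n K s' s) * x ^ statePlus s

/-- `E[x^{Σ_{t=1}^m Z′_t⁺}]` for the Markov chain `Z′`. -/
noncomputable def chainExp (n K : ℕ) (x : ℝ) (m : ℕ) : ℝ :=
  ∑ s : Fin 3, chainF n K x (m - 1) s

/-- `ψ_D(μ) = ℙ(Poisson(μ) ≥ D)`. -/
noncomputable def psi (D : ℕ) (μ : ℝ) : ℝ :=
  1 - ∑ j ∈ Finset.range D, Real.exp (-μ) * μ ^ j / (Nat.factorial j)

/-- `p*(D,λ)`: the largest nonnegative root of `p = ψ_D(λ p)`. -/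
noncomputable def pstar (D : ℕ) (lam : ℝ) : ℝ :=
  sSup {p : ℝ | 0 ≤ p ∧ p = psi D (lam * p)}

/-- `λ_D = sup{λ > 0 : p*(D,λ) = 0}`, the threshold for emergence of the `D`-core. -/
noncomputable def lambdaD (D : ℕ) : ℝ :=
  sSup {lam : ℝ | 0 < lam ∧ pstar D lam = 0}

/-- The sequence `p_h` (for `h ≥ 1`): `p_1 = 1`, `p_{h+1} = ψ_D(λ p_h)`. -/
noncomputable def pseq (D : ℕ) (lam : ℝ) : ℕ → ℝ
  | 0 => 1
  | 1 => 1
  | (h + 2) => psi D (lam * pseq D lam (h + 1))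

/-- `h̄(n) = inf{h ≥ 1 : p_h < 1/n}`. -/
noncomputable def hbar (D : ℕ) (lam : ℝ) (n : ℕ) : ℕ :=
  sInf {h : ℕ | 1 ≤ h ∧ pseq D lam h < 1 / n}

/-- `h̲(n) = sup{h ≥ 1 : p_h > ln(n)/n}`. -/
noncomputable def hlow (D : ℕ) (lam : ℝ) (n : ℕ) : ℕ :=
  sSup {h : ℕ | 1 ≤ h ∧ Real.log n / n < pseq D lam h}

/-- The vertex type of the complete `D`-ary tree of height `h`:
`D^ℓ` vertices at each depth `0 ≤ ℓ ≤ h`. -/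
abbrev DaryVertex (D h : ℕ) : Type := Σ ℓ : Fin (h + 1), Fin (D ^ (ℓ : ℕ))

/-- The complete `D`-ary tree of height `h`: every vertex at depth `ℓ < h` has exactly
`D` children; the vertex `m` at depth `ℓ + 1` has parent `m / D` at depth `ℓ`. -/
def daryTree (D h : ℕ) : SimpleGraph (DaryVertex D h) :=
  SimpleGraph.fromRel (fun u v =>
    (u.1 : ℕ) + 1 = (v.1 : ℕ) ∧ (v.2 : ℕ) / D = (u.2 : ℕ))

/-- Neighbourhood of a vertex, as a `Finset`. -/
noncomputable def nbhd {n : ℕ} (G : Graph n) (v : Fin n) : Finset (Fin n) :=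
  Finset.univ.filter (fun w => G.Adj v w)

/-- `v` is a vertex of maximal degree in `G`. -/
def isMaxDegVertex {n : ℕ} (G : Graph n) (v : Fin n) : Prop :=
  ∀ w : Fin n, (nbhd G w).card ≤ (nbhd G v).card

/-- Degree of `v` inside the vertex set `S` (for the peeling operation). -/
noncomputable def degIn {n : ℕ} (G : Graph n) (S : Finset (Fin n)) (v : Fin n) : ℕ :=
  (S.filter (fun w => G.Adj v w)).card

/-- One peeling operation: remove from `S` all vertices of degree one
(in the subgraph of `G` induced on `S`). -/
noncomputable def peel {n : ℕ} (G : Graph n) (S : Finset (Fin n)) : Finset (Fin n) :=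
  S.filter (fun v => degIn G S v ≠ 1)

/-- The vertex set of a connected component, as a `Finset`. -/
noncomputable def componentFinset {n : ℕ} (G : Graph n) (c : G.ConnectedComponent) :
    Finset (Fin n) :=
  Finset.univ.filter (fun w => G.connectedComponentMk w = c)

/-- The set `S` contains a longest path of `G`. -/
def containsLongestPath {n : ℕ} (G : Graph n) (S : Finset (Fin n)) : Prop :=
  ∃ (u v : Fin n) (p : G.Walk u v), p.IsPath ∧
    (∀ (u' v' : Fin n) (q : G.Walk u' v'), q.IsPath → q.length ≤ p.length) ∧
    (∀ w ∈ p.support, w ∈ S)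


/-- The proportion `I_Γ` of ordered pairs of copies of `Γ` in `G` whose vertex sets
intersect (set to `0` when `G` contains no copy of `Γ`). -/
noncomputable def IGamma {V : Type*} (Γ : SimpleGraph V) {n : ℕ} (G : Graph n) : ℝ :=
  if numCopies Γ G = 0 then 0
  else
    (Set.ncard {H : G.Subgraph × G.Subgraph |
        Nonempty (H.1.coe ≃g Γ) ∧ Nonempty (H.2.coe ≃g Γ) ∧ (H.1.verts ∩ H.2.verts).Nonempty} : ℝ)
      / (numCopies Γ G : ℝ) ^ 2

/-- The overlap of the randomized star estimator which outputs the max-degree vertex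
`vstar G` together with `K` of its neighbours chosen uniformly at random:
`Σ_i ℙ1(i ∈ K̂(G) ∩ 𝒦)`, averaging over the planted injection `σ`, the graph `G0` and
the uniformly random `K`-subset of neighbours. -/
noncomputable def starEstOverlap (n K : ℕ) (p : ℝ) (vstar : Graph n → Fin n) : ℝ :=
  (∑ σ : Fin (K + 1) ↪ Fin n, ∑ G0 : Graph n, P0 n p G0 *
      ((if vstar (G0 ⊔ (starGraph K).map σ) ∈ plantedSet σ then (1 : ℝ) else 0) +
        (∑ S ∈ (nbhd (G0 ⊔ (starGraph K).map σ)
              (vstar (G0 ⊔ (starGraph K).map σ))).powersetCard K,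
            ((S ∩ plantedSet σ).card : ℝ)) /
          (((nbhd (G0 ⊔ (starGraph K).map σ)
              (vstar (G0 ⊔ (starGraph K).map σ))).powersetCard K).card : ℝ))) /
    (Fintype.card (Fin (K + 1) ↪ Fin n) : ℝ)

end PlantedStructures

/-!
Under the planted model, `G₀ ⊔ σ(Γ) = G` forces `σ(Γ) ≤ G` and leaves `G₀` free to range over the
interval `[G \ σ(Γ), G]`; summing Erdős–Rényi weights over that interval frees the edges of `σ(Γ)`
and gives `ℙ0(G) / p^{e(Γ)}`. Hence `ℙ1(G) = L(G) ℙ0(G) / (N p^{e(Γ)})`, where `L(G)` counts the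
injections `σ` with `σ(Γ) ≤ G` and `N` all injections, while `E0[L] = N p^{e(Γ)}`. Each unlabelled
copy of `Γ` is the image of exactly `|Aut Γ|` labelled ones, so `L = |Aut Γ| X_Γ` and the factor
`|Aut Γ|` cancels in the ratio.
-/

open Finset

theorem Finset.sum_Icc_pow_mul_pow {α R : Type*} [DecidableEq α] [CommSemiring R]
    {s t : Finset α} (hst : s ⊆ t) {m : ℕ} (htm : #t ≤ m) (x y : R) :
    ∑ u ∈ Icc s t, x ^ #u * y ^ (m - #u) = x ^ #s * y ^ (m - #t) * (x + y) ^ #(t \ s) := by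
  have hdisj : ∀ u ∈ (t \ s).powerset, Disjoint s u := fun u hu =>
    disjoint_of_subset_right (mem_powerset.1 hu) disjoint_sdiff
  rw [Icc_eq_image_powerset hst, sum_image fun u hu v hv huv => by
      rw [← union_sdiff_cancel_left (hdisj u hu), ← union_sdiff_cancel_left (hdisj v hv)]
      exact congrArg (· \ s) huv,
    ← sum_pow_mul_eq_add_pow, mul_sum]
  refine sum_congr rfl fun u hu => ?_
  have hut : #u ≤ #(t \ s) := card_le_card (mem_powerset.1 hu)
  have hts : #(t \ s) = #t - #s := card_sdiff_of_subset hst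
  have hst' : #s ≤ #t := card_le_card hst
  rw [card_union_of_disjoint (hdisj u hu), pow_add,
    show m - (#s + #u) = (m - #t) + (#(t \ s) - #u) by omega, pow_add]
  ring

namespace SimpleGraph

variable {V W : Type*} {G : SimpleGraph W} {H : SimpleGraph V}

lemma toSubgraph_coeCopy_comp (G' : G.Subgraph) (e : H ≃g G'.coe) :
    (G'.coeCopy.comp e.toCopy).toSubgraph = G' := by
  change Subgraph.map (G'.hom.comp e.toHom) ⊤ = G'
  rw [Subgraph.map_comp]
  simp

lemma natCard_iso_eq_natCard_iso_self {W' : Type*} {G' : SimpleGraph W'} (e : H ≃g G') :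
    Nat.card (H ≃g G') = Nat.card (H ≃g H) :=
  Nat.card_congr
    { toFun := fun φ => e.symm.comp φ
      invFun := fun ψ => e.comp ψ
      left_inv := fun φ => by ext; simp
      right_inv := fun ψ => by ext; simp }

variable [Fintype V] [Fintype W]

lemma card_filter_toSubgraph_eq_natCard_iso (G' : G.Subgraph) :
    #{f : H.Copy G | f.toSubgraph = G'} = Nat.card (H ≃g G'.coe) := by
  rw [← Fintype.card_subtype, ← Nat.card_eq_fintype_card]
  refine (Nat.card_congr (Equiv.ofBijective
    (fun e => ⟨G'.coeCopy.comp e.toCopy, toSubgraph_coeCopy_comp G' e⟩) ⟨?_, ?_⟩)).symm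
  · intro e₁ e₂ h
    ext a
    exact congrArg (· a) (congrArg Subtype.val h)
  · rintro ⟨f, rfl⟩
    exact ⟨f.isoToSubgraph, rfl⟩

theorem labelledCopyCount_eq_copyCount_mul_natCard_iso :
    G.labelledCopyCount H = G.copyCount H * Nat.card (H ≃g H) := by
  have hfib : ∀ G' : G.Subgraph, #{f : H.Copy G | f.toSubgraph = G'}
      = if Nonempty (H ≃g G'.coe) then Nat.card (H ≃g H) else 0 := by
    intro G'
    rw [card_filter_toSubgraph_eq_natCard_iso]
    split_ifs with h
    · exact natCard_iso_eq_natCard_iso_self h.some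
    · have := not_nonempty_iff.1 h
      exact Nat.card_of_isEmpty
  rw [labelledCopyCount, copyCount, ← Finset.card_univ,
    card_eq_sum_card_fiberwise (f := Copy.toSubgraph) (t := univ) (fun _ _ => mem_univ _),
    Finset.sum_congr rfl fun G' _ => hfib G', ← Finset.sum_filter, Finset.sum_const, smul_eq_mul]

theorem card_filter_map_le_eq_labelledCopyCount :
    #{f : V ↪ W | H.map f ≤ G} = G.labelledCopyCount H := by
  rw [← Fintype.card_subtype, labelledCopyCount]
  exact Fintype.card_congr
    { toFun := fun f => ⟨⟨f.1, fun h => f.2 (map_adj_apply.2 h)⟩, f.1.injective⟩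
      invFun := fun c =>
        ⟨c.toEmbedding, (map_le_iff_le_comap _ _ _).2 fun _ _ h => c.toHom.map_adj h⟩
      left_inv := fun _ => rfl
      right_inv := fun _ => rfl }

end SimpleGraph

namespace PlantedStructures

variable {n : ℕ}

lemma edgeCount_eq_card_edgeFinset (G : Graph n) : edgeCount G = #G.edgeFinset := by
  rw [edgeCount, ← SimpleGraph.coe_edgeFinset, Set.ncard_coe_finset]

lemma image_edgeFinset_filter_le_le {A B : Graph n} :
    image (fun G : Graph n => G.edgeFinset) {G : Graph n | A ≤ G ∧ G ≤ B}
      = Icc A.edgeFinset B.edgeFinset := by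
  ext S
  simp only [mem_image, mem_filter, mem_univ, true_and, mem_Icc]
  constructor
  · rintro ⟨G, ⟨hAG, hGB⟩, rfl⟩
    exact ⟨SimpleGraph.edgeFinset_mono hAG, SimpleGraph.edgeFinset_mono hGB⟩
  · rintro ⟨hAS, hSB⟩
    have hdiag : (S : Set (Sym2 (Fin n))) ⊆ Sym2.diagSetᶜ :=
      (SimpleGraph.coe_edgeFinset B ▸ coe_subset.2 hSB).trans B.edgeSet_subset_compl_diagSet
    obtain ⟨G, hG⟩ : ∃ G : Graph n, G.edgeSet = S :=
      ⟨_, (SimpleGraph.edgeSet_fromEdgeSet _).trans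
        (sdiff_eq_left.2 (Set.subset_compl_iff_disjoint_right.1 hdiag))⟩
    have hS : G.edgeFinset = S := coe_injective (by rw [SimpleGraph.coe_edgeFinset, hG])
    refine ⟨G, ⟨?_, ?_⟩, hS⟩ <;> rw [← SimpleGraph.edgeFinset_subset_edgeFinset, hS] <;> assumption

lemma sum_P0_filter_le_le (p : ℝ) {A B : Graph n} (hAB : A ≤ B) :
    ∑ G : Graph n with A ≤ G ∧ G ≤ B, P0 n p G
      = p ^ edgeCount A * (1 - p) ^ (n.choose 2 - edgeCount B) := by
  have hM : #B.edgeFinset ≤ n.choose 2 := by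
    simpa using SimpleGraph.card_edgeFinset_le_card_choose_two (G := B)
  simp only [P0, edgeCount_eq_card_edgeFinset]
  rw [← sum_image (g := fun G : Graph n => G.edgeFinset)
      (f := fun S => p ^ #S * (1 - p) ^ (n.choose 2 - #S))
      fun _ _ _ _ h => SimpleGraph.edgeFinset_inj.1 h,
    image_edgeFinset_filter_le_le, sum_Icc_pow_mul_pow (SimpleGraph.edgeFinset_mono hAB) hM]
  norm_num

lemma sum_P0_filter_le (p : ℝ) (H : Graph n) :
    ∑ G : Graph n with H ≤ G, P0 n p G = p ^ edgeCount H := by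
  have htop : edgeCount (⊤ : Graph n) = n.choose 2 := by
    rw [edgeCount_eq_card_edgeFinset]
    convert SimpleGraph.card_edgeFinset_top_eq_card_choose_two (V := Fin n)
    exact (Fintype.card_fin n).symm
  simpa [htop] using sum_P0_filter_le_le p (le_top : H ≤ ⊤)

lemma pow_edgeCount_mul_sum_P0_filter_sup_eq (p : ℝ) (H G : Graph n) :
    p ^ edgeCount H * ∑ G₀ : Graph n with G₀ ⊔ H = G, P0 n p G₀
      = if H ≤ G then P0 n p G else 0 := by
  split_ifs with hHG
  · have hfilter : ∀ G₀ : Graph n, G₀ ⊔ H = G ↔ G \ H ≤ G₀ ∧ G₀ ≤ G := fun G₀ => by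
      rw [sdiff_le_iff, sup_comm H]
      exact ⟨fun h => ⟨h.ge, h ▸ le_sup_left⟩, fun h => le_antisymm (sup_le h.2 hHG) h.1⟩
    have hcard : edgeCount (G \ H) = edgeCount G - edgeCount H := by
      rw [edgeCount, edgeCount, edgeCount, SimpleGraph.edgeSet_sdiff]
      exact Set.ncard_sdiff (SimpleGraph.edgeSet_mono hHG)
    have hle : edgeCount H ≤ edgeCount G :=
      Set.ncard_le_ncard (SimpleGraph.edgeSet_mono hHG)
    simp only [hfilter]
    rw [sum_P0_filter_le_le p sdiff_le, hcard, ← mul_assoc, pow_mul_pow_sub p hle, P0]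
  · rw [filter_eq_empty_iff.2 fun G₀ _ (h : G₀ ⊔ H = G) => hHG (h ▸ le_sup_right), sum_empty,
      mul_zero]

lemma numCopies_eq_copyCount {V : Type*} (Γ : SimpleGraph V) (G : Graph n) :
    numCopies Γ G = G.copyCount Γ := by
  rw [numCopies, SimpleGraph.copyCount, Set.ncard_eq_toFinset_card']
  congr
  ext G'
  simp only [Set.mem_toFinset, Set.mem_ofPred_eq, mem_filter, mem_univ, true_and]
  exact ⟨fun ⟨e⟩ => ⟨e.symm⟩, fun ⟨e⟩ => ⟨e.symm⟩⟩

variable {V : Type*} [Fintype V]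

lemma edgeCount_map (Γ : SimpleGraph V) (σ : V ↪ Fin n) :
    edgeCount (Γ.map σ) = #Γ.edgeFinset := by
  rw [edgeCount_eq_card_edgeFinset]
  convert SimpleGraph.card_edgeFinset_map σ Γ

lemma P1_mul_pow_card_edgeFinset (p : ℝ) (Γ : SimpleGraph V) (G : Graph n) :
    P1 n p Γ G * p ^ #Γ.edgeFinset
      = G.labelledCopyCount Γ * P0 n p G / Fintype.card (V ↪ Fin n) := by
  have hσ : ∀ σ : V ↪ Fin n,
      (∑ G₀ : Graph n, if G₀ ⊔ Γ.map σ = G then P0 n p G₀ else 0) * p ^ #Γ.edgeFinset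
        = if Γ.map σ ≤ G then P0 n p G else 0 := fun σ => by
    rw [← sum_filter, mul_comm, ← edgeCount_map Γ σ, pow_edgeCount_mul_sum_P0_filter_sup_eq]
  rw [P1, div_mul_eq_mul_div, sum_mul, sum_congr rfl fun σ _ => hσ σ, ← sum_filter, sum_const,
    nsmul_eq_mul, ← SimpleGraph.card_filter_map_le_eq_labelledCopyCount]

lemma E0_labelledCopyCount_eq (p : ℝ) (Γ : SimpleGraph V) :
    E0 n p (fun G => G.labelledCopyCount Γ) = Fintype.card (V ↪ Fin n) * p ^ #Γ.edgeFinset := by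
  simp only [E0, ← SimpleGraph.card_filter_map_le_eq_labelledCopyCount, natCast_card_filter,
    mul_sum, mul_ite, mul_one, mul_zero]
  rw [sum_comm]
  simp only [← sum_filter, sum_P0_filter_le, edgeCount_map, sum_const, card_univ, nsmul_eq_mul]

theorem statement_0_general (n K : ℕ) (lam : ℝ) (hlam : 0 < lam) (hn : lam < n)
    (Γ : SimpleGraph (Fin K)) (G : Graph n) :
    LR n (lam / n) Γ G
      = (numCopies Γ G : ℝ) / E0 n (lam / n) (fun G' => (numCopies Γ G' : ℝ)) := by
  have hp : lam / n ≠ 0 := (div_pos hlam (hlam.trans hn)).ne'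
  have hp1 : 1 - lam / n ≠ 0 := sub_ne_zero.2 ((div_lt_one (hlam.trans hn)).2 hn).ne'
  have hP0 : P0 n (lam / n) G ≠ 0 := mul_ne_zero (pow_ne_zero _ hp) (pow_ne_zero _ hp1)
  have hAut : (Nat.card (Γ ≃g Γ) : ℝ) ≠ 0 := by
    have : Finite (Γ ≃g Γ) := Finite.of_injective _ RelIso.toEquiv_injective
    have : Nonempty (Γ ≃g Γ) := ⟨.refl⟩
    exact_mod_cast Nat.card_pos.ne'
  have hX : ∀ G' : Graph n,
      (numCopies Γ G' : ℝ) = G'.labelledCopyCount Γ / Nat.card (Γ ≃g Γ) := fun G' => by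
    rw [numCopies_eq_copyCount, SimpleGraph.labelledCopyCount_eq_copyCount_mul_natCard_iso,
      Nat.cast_mul, mul_div_cancel_right₀ _ hAut]
  have hE0 : E0 n (lam / n) (fun G' => (numCopies Γ G' : ℝ))
      = E0 n (lam / n) (fun G' => G'.labelledCopyCount Γ) / Nat.card (Γ ≃g Γ) := by
    simp only [E0, hX, mul_div_assoc', sum_div]
  rw [LR, hX, hE0, E0_labelledCopyCount_eq,
    eq_div_of_mul_eq (pow_ne_zero _ hp) (P1_mul_pow_card_edgeFinset _ Γ G)]
  field_simp

/-- For every graph `G` on `[n]`, the likelihood ratio satisfies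
`L(G) = X_Γ(G) / E0[X_Γ]`. -/
theorem statement_0 (n K : ℕ) (lam : ℝ) (hlam : 0 < lam) (hn : lam < n) (hK : K ≤ n)
    (Γ : SimpleGraph (Fin K)) (G : Graph n) :
    LR n (lam / n) Γ G
      = (numCopies Γ G : ℝ) / E0 n (lam / n) (fun G' => (numCopies Γ G' : ℝ)) :=
  statement_0_general n K lam hlam hn Γ G

end PlantedStructures
end

section
/- Let (I_1,…,I_K) be an ordered K-path chosen uniformly at random among all n(n−1)⋯(n−K+1) ordered sequences of K distinct vertices of [n], and for 1 ≤ t ≤ K−1 define Z_t = 1 if the edge (I_t, I_{t+1}) is an edge of the fixed path (1−2−⋯−K), Z_t = 0 if it is not but I_{t+1} ∈ [K], and Z_t = −1 if I_{t+1} ∉ [K]. Let n′ = n−K, and let (Z′_t)_{t≥1} be the Markov chain on state space {−1, 0, 1} with initial distribution ℙ(Z′_1 = 1) = (K/n′)(2/n′), ℙ(Z′_1 ≥ 0) = K/n′, and transition probabilities: from state −1, to (−1, 0, 1) with probabilities (1−K/n′, K/n′, 0); from state 0, with probabilities (1−K/n′, (K−2)/n′, 2/n′); from state 1, with probabilities (1−K/n′,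 (K−1)/n′, 1/n′). Then for every x ≥ 1 and every m ≥ 1: E[x^{Σ_{t=1}^m Z_t⁺}] ≤ E[x^{Σ_{t=1}^m Z′_t⁺}], where z⁺ = max(z, 0). -/
open scoped Classical BigOperators
open Filter

namespace PlantedStructures

/-!
Compare the path and the chain step by step, from the last step backwards. Let
`chainValue j s` be the expected weight `x^{…}` the chain `Z′` collects in `j` further steps
from state `s`, and write `c = n − K`, `V₀ = chainValue j 0`, `P = chainValue j 1 − V₀`,
`D = x · chainValue j 2 − chainValue j 1`. One step of the chain reads
`c · chainValue (j + 1) s = c V₀ + K P + e_s D`, where `e_s ∈ {0, 2, 1}` bounds the number of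
unvisited neighbours on the fixed path of the current vertex, and for `x ≥ 1` the gains `P`, `D`
stay nonnegative. Extending a partial random path by a fresh vertex `v` instead contributes
`V₀ + P · [v ∈ [K]] + D · [new common edge]`; of the at least `c` fresh vertices at most `K`
lie in `[K]` and at most `e_s` close a common edge, so averaging over `v` is dominated by one
step of the chain.
-/

/-- `chainValue n K x j s = E[x^{Σ_{u=1}^{j} Z′_{t+u}⁺} | Z′_t = s]`. -/
noncomputable def chainValue (n K : ℕ) (x : ℝ) : ℕ → Fin 3 → ℝ
  | 0 => fun _ => 1
  | j + 1 => fun s =>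
      ∑ s' : Fin 3, chainTrans n K s s' * (x ^ statePlus s' * chainValue n K x j s')

noncomputable def insideGain (n K : ℕ) (x : ℝ) (j : ℕ) : ℝ :=
  chainValue n K x j 1 - chainValue n K x j 0

noncomputable def edgeGain (n K : ℕ) (x : ℝ) (j : ℕ) : ℝ :=
  x * chainValue n K x j 2 - chainValue n K x j 1

/-- The largest number of unvisited path neighbours of the current vertex `I_{t+1}` given
`Z_t`: none outside `[K]`, two inside, one after arriving along an edge of the path. -/
def maxFreshPathNbrs : Fin 3 → ℕ := ![0, 2, 1]

section Chain

variable {n K : ℕ} {x : ℝ}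

lemma one_le_sub_of_lt (hKn : K < n) : (1 : ℝ) ≤ n - K := by
  have : (K : ℝ) + 1 ≤ n := by exact_mod_cast hKn
  linarith

lemma chainValue_succ_mul (hc : (n : ℝ) - K ≠ 0) (j : ℕ) (s : Fin 3) :
    ((n : ℝ) - K) * chainValue n K x (j + 1) s =
      ((n : ℝ) - K) * chainValue n K x j 0 + K * insideGain n K x j +
        maxFreshPathNbrs s * edgeGain n K x j := by
  fin_cases s <;>
  · simp only [chainValue, chainTrans, statePlus, maxFreshPathNbrs, insideGain, edgeGain,
      Fin.sum_univ_three, Fin.zero_eta, Fin.mk_one, Fin.reduceFinMk, Matrix.cons_val,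
      Matrix.cons_val_zero, Matrix.cons_val_one, pow_zero, pow_one, Nat.cast_zero,
      Nat.cast_one, Nat.cast_ofNat]
    field_simp
    ring

lemma insideGain_succ_mul (hc : (n : ℝ) - K ≠ 0) (j : ℕ) :
    ((n : ℝ) - K) * insideGain n K x (j + 1) = 2 * edgeGain n K x j := by
  have h0 := chainValue_succ_mul (x := x) hc j 0
  have h1 := chainValue_succ_mul (x := x) hc j 1
  simp only [maxFreshPathNbrs, Matrix.cons_val_zero, Matrix.cons_val_one, Nat.cast_zero,
    Nat.cast_ofNat] at h0 h1
  rw [insideGain]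
  linear_combination h1 - h0

lemma edgeGain_succ_mul (hc : (n : ℝ) - K ≠ 0) (j : ℕ) :
    ((n : ℝ) - K) * edgeGain n K x (j + 1) =
      (x - 1) * (((n : ℝ) - K) * chainValue n K x (j + 1) 0) + (x - 2) * edgeGain n K x j := by
  have h0 := chainValue_succ_mul (x := x) hc j 0
  have h1 := chainValue_succ_mul (x := x) hc j 1
  have h2 := chainValue_succ_mul (x := x) hc j 2
  simp only [maxFreshPathNbrs, Matrix.cons_val, Matrix.cons_val_zero, Matrix.cons_val_one,
    Nat.cast_zero, Nat.cast_one, Nat.cast_ofNat] at h0 h1 h2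
  rw [edgeGain]
  linear_combination x * h2 - h1 + (1 - x) * h0

/-- For `x < 2` the gain `edgeGain` may shrink, and the extra bound `edgeGain ≤ (x - 1) V₀`
is what keeps it nonnegative. -/
lemma chainValue_gains_nonneg (hc : 1 ≤ (n : ℝ) - K) (hx : 1 ≤ x) (j : ℕ) :
    0 ≤ chainValue n K x j 0 ∧ 0 ≤ insideGain n K x j ∧ 0 ≤ edgeGain n K x j ∧
      (x ≤ 2 → edgeGain n K x j ≤ (x - 1) * chainValue n K x j 0) := by
  have hc0 : (n : ℝ) - K ≠ 0 := by linarith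
  induction j with
  | zero => simp [chainValue, insideGain, edgeGain, hx]
  | succ j ih =>
    obtain ⟨hV, hP, hD, hDle⟩ := ih
    have eV := chainValue_succ_mul (x := x) hc0 j 0
    have eP := insideGain_succ_mul (x := x) hc0 j
    have eD := edgeGain_succ_mul (x := x) hc0 j
    simp only [maxFreshPathNbrs, Matrix.cons_val_zero, Nat.cast_zero, zero_mul,
      add_zero] at eV
    have hV' : 0 ≤ chainValue n K x (j + 1) 0 := by nlinarith
    have hcV : ((n : ℝ) - K) * chainValue n K x j 0 ≤
        ((n : ℝ) - K) * chainValue n K x (j + 1) 0 := by nlinarith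
    refine ⟨hV', by nlinarith, ?_, fun h2 => by nlinarith⟩
    rcases le_or_gt x 2 with h2 | h2
    · nlinarith [hDle h2, mul_nonneg (sub_nonneg.2 hx) (sub_nonneg.2 hx)]
    · nlinarith [mul_nonneg (sub_nonneg.2 hx) hV']

lemma sum_chainF_succ_mul_chainValue (t j : ℕ) :
    ∑ s, chainF n K x (t + 1) s * chainValue n K x j s =
      ∑ s, chainF n K x t s * chainValue n K x (j + 1) s := by
  simp only [chainF, chainValue, Finset.sum_mul, Finset.mul_sum]
  rw [Finset.sum_comm]
  exact Finset.sum_congr rfl fun _ _ => Finset.sum_congr rfl fun _ _ => by ring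

lemma chainExp_succ (j : ℕ) :
    chainExp n K x (j + 1) = ∑ s, chainF n K x 0 s * chainValue n K x j s := by
  have key : ∀ j t, ∑ s, chainF n K x (t + j) s * chainValue n K x 0 s =
      ∑ s, chainF n K x t s * chainValue n K x j s := by
    intro j
    induction j with
    | zero => exact fun _ => rfl
    | succ j ih =>
      intro t
      rw [← add_assoc, add_right_comm, ih, sum_chainF_succ_mul_chainValue]
  simpa [chainExp, chainValue] using key j 0

lemma chainExp_succ_mul (hc : (n : ℝ) - K ≠ 0) (j : ℕ) :
    ((n : ℝ) - K) ^ 2 * chainExp n K x (j + 1) =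
      ((n : ℝ) - K) ^ 2 * chainValue n K x j 0 + ((n : ℝ) - K) * K * insideGain n K x j +
        2 * K * edgeGain n K x j := by
  rw [chainExp_succ]
  simp only [chainF, chainInit, statePlus, insideGain, edgeGain, Fin.sum_univ_three,
    Matrix.cons_val, Matrix.cons_val_zero, Matrix.cons_val_one, pow_zero, pow_one]
  field_simp
  ring

lemma le_mul_chainExp_succ (hKn : K < n) (hx : 1 ≤ x) (j : ℕ) {s : ℝ} (hs : s ≤ 2 * K) :
    n * (n - 1) * chainValue n K x j 0 + n * K * insideGain n K x j + s * edgeGain n K x j ≤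
      n * (n - 1) * chainExp n K x (j + 1) := by
  have hc := one_le_sub_of_lt hKn
  obtain ⟨hV, hP, hD, -⟩ := chainValue_gains_nonneg hc hx j
  have hexp := chainExp_succ_mul (x := x) (by linarith : (n : ℝ) - K ≠ 0) j
  set c : ℝ := n - K
  have hKc : (K : ℝ) * c ≤ K * (n - 1) := by
    rcases Nat.eq_zero_or_pos K with hK | hK
    · simp [hK]
    · have : (1 : ℝ) ≤ K := by exact_mod_cast hK
      exact mul_le_mul_of_nonneg_left (by simp only [c]; linarith) (by positivity)
  have hKc2 : (K : ℝ) * c ^ 2 ≤ K * (n * (n - 1)) := by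
    have := mul_le_mul_of_nonneg_right hKc (by linarith : 0 ≤ c)
    nlinarith
  have tP := mul_le_mul_of_nonneg_left hKc (by positivity : 0 ≤ n * insideGain n K x j * c)
  have tD := mul_le_mul_of_nonneg_left (mul_le_mul_of_nonneg_right hs hD) (sq_nonneg c)
  have tD' := mul_le_mul_of_nonneg_right hKc2 (by positivity : 0 ≤ 2 * edgeGain n K x j)
  rw [← mul_le_mul_iff_right₀ (by positivity : 0 < c ^ 2), mul_left_comm (c ^ 2), hexp]
  linarith

end Chain

/-- The state `Z_t ∈ {−1, 0, 1}`, encoded as `0, 1, 2 : Fin 3`, of a step `u → v` of a path. -/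
noncomputable def edgeState (K : ℕ) {n : ℕ} (u v : Fin n) : Fin 3 :=
  if inPathEdge K u v then 2 else if v.val < K then 1 else 0

noncomputable def pathHits (K : ℕ) {n r : ℕ} (g : Fin (r + 1) → Fin n) : ℕ :=
  ∑ i : Fin r, if inPathEdge K (g i.castSucc) (g i.succ) then 1 else 0

section Path

variable {n K : ℕ}

lemma inPathEdge_comm {u v : Fin n} : inPathEdge K u v ↔ inPathEdge K v u := by
  unfold inPathEdge
  omega

lemma pathHits_snoc {r : ℕ} (g : Fin (r + 1) → Fin n) (v : Fin n) :
    pathHits K (Fin.snoc g v : Fin (r + 2) → Fin n) =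
      pathHits K g + if inPathEdge K (g (Fin.last r)) v then 1 else 0 := by
  simp only [pathHits, Fin.sum_univ_castSucc (n := r), Fin.succ_castSucc, Fin.snoc_castSucc,
    Fin.succ_last, Fin.snoc_last]

lemma card_filter_inPathEdge_le_two (S : Finset (Fin n)) (w : Fin n) :
    (S.filter (inPathEdge K w)).card ≤ 2 := by
  calc (S.filter (inPathEdge K w)).card ≤ ({w.val + 1, w.val - 1} : Finset ℕ).card := by
        refine Finset.card_le_card_of_injOn Fin.val (fun v hv => ?_) Fin.val_injective.injOn
        simp only [Finset.coe_filter, Set.mem_ofPred_eq, inPathEdge] at hv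
        simp only [Finset.coe_insert, Finset.coe_singleton, Set.mem_insert_iff,
          Set.mem_singleton_iff]
        omega
    _ ≤ 2 := Finset.card_le_two

lemma card_filter_inPathEdge_le (S : Finset (Fin n)) (u w : Fin n) (hu : u ∉ S) :
    (S.filter (inPathEdge K w)).card ≤ maxFreshPathNbrs (edgeState K u w) := by
  unfold edgeState
  split_ifs with huw hw
  · have h := card_filter_inPathEdge_le_two (K := K) (insert u S) w
    rw [Finset.filter_insert, if_pos (inPathEdge_comm.1 huw),
      Finset.card_insert_of_notMem fun h => hu (Finset.mem_filter.1 h).1] at h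
    show _ ≤ 1
    omega
  · exact card_filter_inPathEdge_le_two S w
  · exact (Finset.card_eq_zero.2 (Finset.filter_eq_empty_iff.2 fun v _ h => hw h.1)).le

end Path

section Embedding

variable {α β : Type*} [AddCommMonoid β]

/-- `Equiv.embeddingFinSucc`, with the new point appended at the end instead of the front. -/
def embeddingFinSuccLast (r : ℕ) (α : Type*) :
    (Fin (r + 1) ↪ α) ≃ Σ g : Fin r ↪ α, {a // a ∉ Set.range g} :=
  (finSuccEquivLast.embeddingCongr (Equiv.refl α)).trans
    (Function.Embedding.optionEmbeddingEquiv (Fin r) α)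

lemma coe_embeddingFinSuccLast_symm {r : ℕ} (p : Σ g : Fin r ↪ α, {a // a ∉ Set.range g}) :
    ((embeddingFinSuccLast r α).symm p : Fin (r + 1) → α) = Fin.snoc p.1 p.2.1 := by
  ext i
  induction i using Fin.lastCases with
  | last => simp [embeddingFinSuccLast]
  | cast i => simp [embeddingFinSuccLast]

lemma sum_embedding_succ [Fintype α] [DecidableEq α] {r : ℕ} (G : (Fin (r + 1) → α) → β) :
    ∑ f : Fin (r + 1) ↪ α, G f =
      ∑ g : Fin r ↪ α, ∑ a ∈ (Finset.univ.map g)ᶜ, G (Fin.snoc g a) := by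
  rw [← (embeddingFinSuccLast r α).symm.sum_comp, Fintype.sum_sigma]
  refine Finset.sum_congr rfl fun g _ => ?_
  simp only [coe_embeddingFinSuccLast_symm]
  rw [Finset.sum_subtype (Finset.univ.map g)ᶜ (p := (· ∉ Set.range g)) (fun a => by simp)]

lemma card_compl_map_univ [Fintype α] [DecidableEq α] {r : ℕ} (g : Fin r ↪ α) :
    (Finset.univ.map g)ᶜ.card = Fintype.card α - r := by
  simp [Finset.card_compl]

lemma sum_embedding_comp_castLE [Fintype α] [DecidableEq α] {a b : ℕ} (hab : a ≤ b)
    (A : (Fin a → α) → β) :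
    ∑ f : Fin b ↪ α, A (f ∘ Fin.castLE hab) =
      (Fintype.card α - a).descFactorial (b - a) • ∑ g : Fin a ↪ α, A g := by
  induction b, hab using Nat.le_induction with
  | base =>
    rw [Nat.sub_self, Nat.descFactorial_zero, one_smul]
    rfl
  | succ b hab ih =>
    have hsnoc (g : Fin b → α) (v : α) :
        Fin.snoc g v ∘ Fin.castLE (hab.trans b.le_succ) = g ∘ Fin.castLE hab :=
      funext fun i => Fin.snoc_castSucc (α := fun _ => α) (i := Fin.castLE hab i) ..
    rw [sum_embedding_succ (fun h => A (h ∘ Fin.castLE _))]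
    simp only [hsnoc, Finset.sum_const, card_compl_map_univ]
    rw [← Finset.smul_sum, ih, smul_smul, Nat.sub_add_comm hab, Nat.descFactorial_succ,
      Nat.sub_sub_sub_cancel_right hab]

end Embedding

section Step

variable {n K : ℕ} {x : ℝ}

lemma pow_mul_chainValue_edgeState (j : ℕ) (u v : Fin n) :
    x ^ (if inPathEdge K u v then 1 else 0) * chainValue n K x j (edgeState K u v) =
      chainValue n K x j 0 + (if v.val < K then insideGain n K x j else 0) +
        (if inPathEdge K u v then edgeGain n K x j else 0) := by
  unfold edgeState insideGain edgeGain
  by_cases he : inPathEdge K u v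
  · simp only [he, he.2.1, if_true]
    ring
  · split_ifs <;> ring

lemma sum_step_eq (j : ℕ) (S : Finset (Fin n)) (w : Fin n) :
    ∑ v ∈ S, x ^ (if inPathEdge K w v then 1 else 0) * chainValue n K x j (edgeState K w v) =
      S.card * chainValue n K x j 0 + (S.filter (·.val < K)).card * insideGain n K x j +
        (S.filter (inPathEdge K w)).card * edgeGain n K x j := by
  simp only [pow_mul_chainValue_edgeState, Finset.sum_add_distrib, ← Finset.sum_filter,
    Finset.sum_const, nsmul_eq_mul]

lemma card_filter_val_lt_le (S : Finset (Fin n)) : (S.filter (·.val < K)).card ≤ K :=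
  (Finset.card_le_card (Finset.filter_subset_filter _ (Finset.subset_univ S))).trans
    (Fin.card_filter_val_lt.trans_le (min_le_right _ _))

lemma sum_step_le (hKn : K < n) (hx : 1 ≤ x) (j : ℕ) {S : Finset (Fin n)} {u : Fin n}
    (hu : u ∉ S) (hS : n - K ≤ S.card) (w : Fin n) :
    ∑ v ∈ S, x ^ (if inPathEdge K w v then 1 else 0) * chainValue n K x j (edgeState K w v) ≤
      S.card * chainValue n K x (j + 1) (edgeState K u w) := by
  have hc := one_le_sub_of_lt hKn
  obtain ⟨-, hP, hD, -⟩ := chainValue_gains_nonneg hc hx j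
  have hcS : (n : ℝ) - K ≤ S.card := by
    rw [← Nat.cast_sub hKn.le]
    exact_mod_cast hS
  have hin : ((S.filter (·.val < K)).card : ℝ) ≤ K := by
    exact_mod_cast card_filter_val_lt_le S
  have hedge : ((S.filter (inPathEdge K w)).card : ℝ) ≤ maxFreshPathNbrs (edgeState K u w) := by
    exact_mod_cast card_filter_inPathEdge_le S u w hu
  have hP' := mul_le_mul_of_nonneg_right (mul_le_mul hcS hin (by positivity) (by positivity)) hP
  have hD' := mul_le_mul_of_nonneg_right (mul_le_mul hcS hedge (by positivity) (by positivity)) hD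
  rw [sum_step_eq, ← mul_le_mul_iff_right₀ (by linarith : (0 : ℝ) < n - K), mul_left_comm,
    chainValue_succ_mul (by linarith)]
  linarith

lemma sum_first_step_le (hKn : K < n) (hx : 1 ≤ x) (j : ℕ) (u : Fin n) :
    ∑ v ∈ {u}ᶜ, x ^ (if inPathEdge K u v then 1 else 0) * chainValue n K x j (edgeState K u v) ≤
      (n - 1) * chainValue n K x j 0 + K * insideGain n K x j +
        (if u.val < K then 2 else 0) * edgeGain n K x j := by
  have hc := one_le_sub_of_lt hKn
  obtain ⟨-, hP, hD, -⟩ := chainValue_gains_nonneg hc hx j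
  have hin : (((({u}ᶜ : Finset (Fin n))).filter (·.val < K)).card : ℝ) ≤ K := by
    exact_mod_cast card_filter_val_lt_le _
  have hedge : (((({u}ᶜ : Finset (Fin n))).filter (inPathEdge K u)).card : ℝ) ≤
      if u.val < K then 2 else 0 := by
    split_ifs with hu
    · exact_mod_cast card_filter_inPathEdge_le_two _ u
    · rw [Finset.filter_eq_empty_iff.2 fun v _ (h : inPathEdge K u v) => hu h.1]
      simp
  have hcard : (({u}ᶜ : Finset (Fin n)).card : ℝ) = n - 1 := by
    rw [Finset.card_compl, Finset.card_singleton, Fintype.card_fin,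
      Nat.cast_sub (by omega : 1 ≤ n), Nat.cast_one]
  rw [sum_step_eq, hcard]
  nlinarith

end Step

/-- The sum, over ordered paths `(I_1, …, I_{t+2})`, of `x^{Σ_{s ≤ t+1} Z_s⁺}` times the value
`chainValue j (Z_{t+1})` of letting the chain `Z′` run `j` more steps from the current state. -/
noncomputable def weightedPathSum (n K : ℕ) (x : ℝ) (t j : ℕ) : ℝ :=
  ∑ g : Fin (t + 2) ↪ Fin n, x ^ pathHits K ⇑g *
    chainValue n K x j (edgeState K (g (Fin.last t).castSucc) (g (Fin.last (t + 1))))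

section WeightedPathSum

variable {n K : ℕ} {x : ℝ}

lemma weightedPathSum_eq (t j : ℕ) :
    weightedPathSum n K x t j = ∑ g : Fin (t + 1) ↪ Fin n, x ^ pathHits K ⇑g *
      ∑ v ∈ (Finset.univ.map g)ᶜ, x ^ (if inPathEdge K (g (Fin.last t)) v then 1 else 0) *
        chainValue n K x j (edgeState K (g (Fin.last t)) v) := by
  rw [weightedPathSum, sum_embedding_succ (fun h => x ^ pathHits K h *
    chainValue n K x j (edgeState K (h (Fin.last t).castSucc) (h (Fin.last (t + 1)))))]
  simp only [pathHits_snoc, Fin.snoc_castSucc, Fin.snoc_last, pow_add, Finset.mul_sum, mul_assoc]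

lemma weightedPathSum_zero_le (hKn : K < n) (hx : 1 ≤ x) (j : ℕ) :
    weightedPathSum n K x 0 j ≤ n.descFactorial 2 * chainExp n K x (j + 1) := by
  have hsum : weightedPathSum n K x 0 j = ∑ u : Fin n, ∑ v ∈ {u}ᶜ,
      x ^ (if inPathEdge K u v then 1 else 0) * chainValue n K x j (edgeState K u v) := by
    rw [weightedPathSum_eq]
    exact Fintype.sum_equiv (Equiv.uniqueEmbeddingEquivResult (α := Fin 1)) _ _ fun g => by
      simp only [pathHits, Finset.univ_eq_empty, Finset.sum_empty, pow_zero, one_mul,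
        Fin.last_zero]
      rfl
  have hinside : ∑ u : Fin n, (if u.val < K then (2 : ℝ) else 0) ≤ 2 * K := by
    rw [← Finset.sum_filter, Finset.sum_const, nsmul_eq_mul, mul_comm]
    gcongr
    exact_mod_cast card_filter_val_lt_le Finset.univ
  have hdf : (n.descFactorial 2 : ℝ) = n * (n - 1) := by
    rw [Nat.descFactorial_succ, Nat.descFactorial_one, Nat.cast_mul, Nat.cast_sub (by omega)]
    push_cast
    ring
  rw [hsum, hdf]
  refine (Finset.sum_le_sum fun u _ => sum_first_step_le hKn hx j u).trans ?_
  simp only [Finset.sum_add_distrib, ← Finset.sum_mul, Finset.sum_const, Finset.card_univ,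
    Fintype.card_fin, nsmul_eq_mul]
  exact le_mul_chainExp_succ hKn hx j hinside

lemma weightedPathSum_succ_le (hKn : K < n) (hx : 1 ≤ x) {t : ℕ} (ht : t + 2 ≤ K) (j : ℕ) :
    weightedPathSum n K x (t + 1) j ≤
      (n - (t + 2) : ℕ) * weightedPathSum n K x t (j + 1) := by
  rw [weightedPathSum_eq, weightedPathSum, Finset.mul_sum]
  refine Finset.sum_le_sum fun g _ => ?_
  have hS : (Finset.univ.map g)ᶜ.card = n - (t + 2) :=
    (card_compl_map_univ g).trans (by rw [Fintype.card_fin])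
  calc _ ≤ x ^ pathHits K ⇑g * ((Finset.univ.map g)ᶜ.card *
        chainValue n K x (j + 1) (edgeState K (g (Fin.last t).castSucc) (g (Fin.last (t + 1))))) :=
        mul_le_mul_of_nonneg_left (sum_step_le hKn hx j (by simp) (by omega) _)
          (pow_nonneg (by linarith) _)
    _ = _ := by rw [hS]; ring

lemma weightedPathSum_le (hKn : K < n) (hx : 1 ≤ x) {t : ℕ} (ht : t + 2 ≤ K) (j : ℕ) :
    weightedPathSum n K x t j ≤ n.descFactorial (t + 2) * chainExp n K x (t + j + 1) := by
  induction t generalizing j with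
  | zero => simpa using weightedPathSum_zero_le hKn hx j
  | succ t ih =>
    calc _ ≤ ((n - (t + 2) : ℕ) : ℝ) * weightedPathSum n K x t (j + 1) :=
          weightedPathSum_succ_le hKn hx (by omega) j
      _ ≤ (n - (t + 2) : ℕ) * (n.descFactorial (t + 2) * chainExp n K x (t + (j + 1) + 1)) := by
          gcongr
          exact ih (by omega) (j + 1)
      _ = _ := by
          rw [show t + (j + 1) + 1 = t + 1 + j + 1 by ring, Nat.descFactorial_succ n (t + 2)]
          push_cast
          ring

end WeightedPathSum

lemma zPlusSum_eq_pathHits {n K m : ℕ} (h : m + 1 ≤ K) (f : Fin K ↪ Fin n) :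
    zPlusSum n K m f = pathHits K (f ∘ Fin.castLE h) := by
  rw [zPlusSum, Finset.card_filter, ← Fin.sum_univ_eq_sum_range]
  exact Finset.sum_congr rfl fun i _ =>
    if_congr ⟨fun ⟨_, hi⟩ => hi, fun hi => ⟨by omega, hi⟩⟩ rfl rfl

theorem statement_9_general (n K : ℕ) (hKn : K < n) (x : ℝ) (hx : 1 ≤ x)
    (m : ℕ) (hm : 1 ≤ m) (hmK : m ≤ K - 1) :
    (∑ f : Fin K ↪ Fin n, x ^ zPlusSum n K m f) / (Fintype.card (Fin K ↪ Fin n) : ℝ)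
      ≤ chainExp n K x m := by
  obtain ⟨t, rfl⟩ : ∃ t, m = t + 1 := ⟨m - 1, by omega⟩
  have ht : t + 2 ≤ K := by omega
  have hpaths : ∑ f : Fin K ↪ Fin n, x ^ zPlusSum n K (t + 1) f =
      (n - (t + 2)).descFactorial (K - (t + 2)) * weightedPathSum n K x t 0 := by
    simp only [zPlusSum_eq_pathHits ht]
    rw [sum_embedding_comp_castLE ht (fun g => x ^ pathHits K g), Fintype.card_fin, nsmul_eq_mul]
    simp [weightedPathSum, chainValue]
  have hcard : (Fintype.card (Fin K ↪ Fin n) : ℝ) =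
      (n - (t + 2)).descFactorial (K - (t + 2)) * n.descFactorial (t + 2) := by
    rw [Fintype.card_embedding_eq, Fintype.card_fin, Fintype.card_fin,
      ← Nat.descFactorial_mul_descFactorial ht, Nat.cast_mul]
  have hpos : (0 : ℝ) < Fintype.card (Fin K ↪ Fin n) :=
    Nat.cast_pos.2 (Fintype.card_pos_iff.2 ⟨Fin.castLEEmb hKn.le⟩)
  rw [div_le_iff₀ hpos, hpaths, hcard, mul_comm (chainExp _ _ _ _), mul_assoc]
  gcongr
  simpa using weightedPathSum_le hKn hx ht 0

/-- the Markov chain `Z′` stochastically dominates the overlap process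
`Z` of a uniform random ordered `K`-path with the fixed path `(1−2−⋯−K)`:
for every `x ≥ 1` and `1 ≤ m ≤ K − 1`,
`E[x^{Σ_{t=1}^m Z_t⁺}] ≤ E[x^{Σ_{t=1}^m Z′_t⁺}]`. -/
theorem statement_9 (n K : ℕ) (hK : 2 ≤ K) (hKn : K < n) (x : ℝ) (hx : 1 ≤ x)
    (m : ℕ) (hm : 1 ≤ m) (hmK : m ≤ K - 1) :
    (∑ f : Fin K ↪ Fin n, x ^ zPlusSum n K m f) / (Fintype.card (Fin K ↪ Fin n) : ℝ)
      ≤ chainExp n K x m :=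
  statement_9_general n K hKn x hx m hm hmK

end PlantedStructures
end

section
/- Fix an integer D ≥ 2 and 0 < λ < λ_D. Then the sequence (p_h) defined by p_1 = 1 and p_{h+1} = ψ_D(λ p_h) is nonincreasing and converges to 0 as h → ∞; moreover there exist constants 0 < a ≤ b and an integer h_0 such that for all h ≥ h_0: exp(−b·D^h) ≤ p_h ≤ exp(−a·D^h). -/
/-!
Since `ψ_D` is nondecreasing on `[0, ∞)`, the sequence `p_h` is nonincreasing and converges to a
fixed point of `p ↦ ψ_D(λ p)`. It is also monotone in `λ`, so it is dominated by the sequence for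
some `λ' ∈ (λ, λ_D)` with `p*(D, λ') = 0`, whose limit is a nonnegative fixed point, hence `0`.

For the rates, `e^{-μ} μ^D / D! ≤ ψ_D(μ) ≤ μ^D / D!`, so `y_h = -log p_h` satisfies
`D y_h - α ≤ y_{h+1} ≤ D y_h + β` for constants `α, β ≥ 0`. Once `y_h` exceeds the fixed point
`α / (D - 1)` of the lower recursion, the distance to that fixed point grows at least like `D^h`,
while the upper recursion gives growth at most like `D^h`.
-/

open scoped Classical BigOperators
open Filter

namespace PlantedStructures

open Real Set Nat

section Psi

variable (D : ℕ) {μ : ℝ}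

theorem hasSum_psi (μ : ℝ) :
    HasSum (fun j ↦ exp (-μ) * μ ^ (j + D) / (j + D)!) (psi D μ) := by
  have h := (NormedSpace.expSeries_div_hasSum_exp μ).mul_left (exp (-μ))
  rw [← exp_eq_exp_ℝ, ← exp_add, neg_add_cancel, exp_zero] at h
  simpa only [psi, mul_div_assoc] using (hasSum_nat_add_iff' D).mpr h

theorem psi_le_one (hμ : 0 ≤ μ) : psi D μ ≤ 1 := by
  rw [psi, sub_le_self_iff]
  exact Finset.sum_nonneg fun j _ ↦ by positivity

theorem exp_neg_mul_pow_div_factorial_le_psi (hμ : 0 ≤ μ) :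
    exp (-μ) * μ ^ D / D ! ≤ psi D μ := by
  simpa using le_hasSum (hasSum_psi D μ) 0 fun j _ ↦ by positivity

theorem psi_pos (hμ : 0 < μ) : 0 < psi D μ :=
  (by positivity : 0 < exp (-μ) * μ ^ D / D !).trans_le
    (exp_neg_mul_pow_div_factorial_le_psi D hμ.le)

theorem psi_le_pow_div_factorial (hμ : 0 ≤ μ) : psi D μ ≤ μ ^ D / D ! := by
  have h := (NormedSpace.expSeries_div_hasSum_exp μ).mul_left (exp (-μ) * (μ ^ D / D !))
  rw [← exp_eq_exp_ℝ, mul_right_comm, ← exp_add, neg_add_cancel, exp_zero, one_mul] at h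
  refine hasSum_le (fun j ↦ ?_) (hasSum_psi D μ) h
  have hfac : (D ! * j ! : ℝ) ≤ (j + D)! := by
    exact_mod_cast Nat.le_of_dvd (factorial_pos _)
      (add_comm D j ▸ factorial_mul_factorial_dvd_factorial_add D j)
  calc exp (-μ) * μ ^ (j + D) / (j + D)!
      ≤ exp (-μ) * μ ^ (j + D) / (D ! * j !) := by gcongr
    _ = exp (-μ) * (μ ^ D / D !) * (μ ^ j / j !) := by ring

theorem continuous_psi : Continuous (psi D) := by
  unfold psi
  fun_prop

theorem psi_succ : psi (D + 1) = fun μ ↦ psi D μ - exp (-μ) * μ ^ D / D ! := by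
  ext μ
  rw [psi, psi, Finset.sum_range_succ]
  ring

theorem hasDerivAt_psi_succ (μ : ℝ) : HasDerivAt (psi (D + 1)) (exp (-μ) * μ ^ D / D !) μ := by
  induction D with
  | zero =>
    have h : psi 1 = fun x ↦ 1 - exp (-x) := by ext x; simp [psi]
    rw [zero_add, h]
    simpa using (hasDerivAt_neg μ).exp.const_sub 1
  | succ d ih =>
    have hterm := ((hasDerivAt_neg μ).exp.mul (hasDerivAt_pow (d + 1) μ)).div_const ((d + 1)! : ℝ)
    rw [psi_succ]
    refine (ih.sub hterm).congr_deriv ?_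
    rw [factorial_succ]
    push_cast
    field_simp
    ring

theorem monotoneOn_psi : MonotoneOn (psi D) (Ici 0) := by
  cases D with
  | zero =>
    have h : psi 0 = fun _ ↦ 1 := by ext; simp [psi]
    exact h ▸ monotoneOn_const
  | succ d =>
    refine monotoneOn_of_hasDerivWithinAt_nonneg (convex_Ici 0) (continuous_psi _).continuousOn
      (fun μ _ ↦ (hasDerivAt_psi_succ d μ).hasDerivWithinAt) fun μ hμ ↦ ?_
    have : 0 ≤ μ := (interior_subset hμ : μ ∈ Ici 0)
    positivity

end Psi

theorem le_pstar {D : ℕ} {lam p : ℝ} (hlam : 0 ≤ lam) (hp : 0 ≤ p) (hfix : p = psi D (lam * p)) :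
    p ≤ pstar D lam :=
  le_csSup ⟨1, fun _ ⟨hq, hqfix⟩ ↦ hqfix ▸ psi_le_one D (by positivity)⟩ ⟨hp, hfix⟩

section Pseq

variable {D : ℕ} {lam : ℝ}

theorem pseq_succ {h : ℕ} (hh : 1 ≤ h) : pseq D lam (h + 1) = psi D (lam * pseq D lam h) := by
  obtain ⟨k, rfl⟩ := exists_add_of_le hh
  rw [add_comm 1 k]
  rfl

theorem pseq_pos (hlam : 0 < lam) (h : ℕ) : 0 < pseq D lam h := by
  induction h using Nat.strong_induction_on with
  | _ h ih =>
    match h with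
    | 0 | 1 => exact one_pos
    | k + 2 => exact psi_pos D (mul_pos hlam (ih (k + 1) (by omega)))

theorem pseq_le_one (hlam : 0 < lam) (h : ℕ) : pseq D lam h ≤ 1 := by
  match h with
  | 0 | 1 => exact le_rfl
  | k + 2 => exact psi_le_one D (mul_pos hlam (pseq_pos hlam (k + 1))).le

theorem pseq_antitone (hlam : 0 < lam) : Antitone (pseq D lam) := by
  refine antitone_nat_of_succ_le fun h ↦ ?_
  induction h with
  | zero => exact le_rfl
  | succ h ih =>
    rcases h with _ | h
    · exact pseq_le_one hlam 2
    · exact monotoneOn_psi D (mul_pos hlam (pseq_pos hlam _)).le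
        (mul_pos hlam (pseq_pos hlam _)).le (mul_le_mul_of_nonneg_left ih hlam.le)

theorem pseq_le_pseq_of_le {lam' : ℝ} (hlam : 0 < lam) (hle : lam ≤ lam') (h : ℕ) :
    pseq D lam h ≤ pseq D lam' h := by
  induction h using Nat.strong_induction_on with
  | _ h ih =>
    match h with
    | 0 | 1 => exact le_rfl
    | k + 2 =>
      exact monotoneOn_psi D (mul_pos hlam (pseq_pos hlam _)).le
        (mul_pos (hlam.trans_le hle) (pseq_pos (hlam.trans_le hle) _)).le
        (mul_le_mul hle (ih (k + 1) (by omega)) (pseq_pos hlam _).le (hlam.le.trans hle))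

theorem tendsto_pseq_zero_of_pstar_eq_zero (hlam : 0 < lam) (hstar : pstar D lam = 0) :
    Tendsto (pseq D lam) atTop (nhds 0) := by
  have hconv := tendsto_atTop_ciInf (pseq_antitone (D := D) hlam)
    ⟨0, forall_mem_range.2 fun h ↦ (pseq_pos hlam h).le⟩
  set L := ⨅ h, pseq D lam h
  have hL : 0 ≤ L := le_ciInf fun h ↦ (pseq_pos hlam h).le
  have hfix : L = psi D (lam * L) :=
    tendsto_nhds_unique
      ((hconv.comp (tendsto_add_atTop_nat 1)).congr' (eventually_atTop.2 ⟨1, fun h ↦ pseq_succ⟩))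
      ((((continuous_psi D).comp (continuous_const_mul lam)).tendsto L).comp hconv)
  rwa [le_antisymm (hstar ▸ le_pstar hlam.le hL hfix) hL] at hconv

theorem tendsto_pseq_zero (hlam : 0 < lam) (hsub : lam < lambdaD D) :
    Tendsto (pseq D lam) atTop (nhds 0) := by
  have hne : {l : ℝ | 0 < l ∧ pstar D l = 0}.Nonempty := by
    -- otherwise `lambdaD D = sSup ∅ = 0 < lam`
    by_contra hempty
    rw [not_nonempty_iff_eq_empty] at hempty
    rw [lambdaD, hempty, Real.sSup_empty] at hsub
    exact hsub.not_gt hlam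
  obtain ⟨l, ⟨hl, hstar⟩, hlt⟩ := exists_lt_of_lt_csSup hne hsub
  exact tendsto_of_tendsto_of_tendsto_of_le_of_le tendsto_const_nhds
    (tendsto_pseq_zero_of_pstar_eq_zero hl hstar) (fun h ↦ (pseq_pos hlam h).le)
    (pseq_le_pseq_of_le hlam hlt.le)

theorem pseq_succ_le (hlam : 0 < lam) {h : ℕ} (hh : 1 ≤ h) :
    pseq D lam (h + 1) ≤ lam ^ D / D ! * pseq D lam h ^ D := by
  rw [pseq_succ hh, div_mul_eq_mul_div, ← mul_pow]
  exact psi_le_pow_div_factorial D (mul_pos hlam (pseq_pos hlam h)).le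

theorem le_pseq_succ (hlam : 0 < lam) {h : ℕ} (hh : 1 ≤ h) :
    exp (-lam) * lam ^ D / D ! * pseq D lam h ^ D ≤ pseq D lam (h + 1) := by
  have hμ : 0 ≤ lam * pseq D lam h := (mul_pos hlam (pseq_pos hlam h)).le
  have hexp : exp (-lam) ≤ exp (-(lam * pseq D lam h)) := by
    gcongr
    exact mul_le_of_le_one_right hlam.le (pseq_le_one hlam h)
  rw [pseq_succ hh]
  calc exp (-lam) * lam ^ D / D ! * pseq D lam h ^ D
      = exp (-lam) * (lam * pseq D lam h) ^ D / D ! := by ring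
    _ ≤ exp (-(lam * pseq D lam h)) * (lam * pseq D lam h) ^ D / D ! := by gcongr
    _ ≤ psi D (lam * pseq D lam h) := exp_neg_mul_pow_div_factorial_le_psi D hμ

end Pseq

section GeometricGrowth

variable {y : ℕ → ℝ} {d : ℝ} {N : ℕ}

theorem exists_pos_mul_pow_le_of_mul_sub_le (hd : 1 < d) {α : ℝ} (hα : 0 ≤ α)
    (hrec : ∀ n ≥ N, d * y n - α ≤ y (n + 1)) (hN : α / (d - 1) < y N) :
    ∃ a > 0, ∀ n ≥ N, a * d ^ n ≤ y n := by
  have hfix : d * (α / (d - 1)) = α + α / (d - 1) := by field_simp [(sub_pos.2 hd).ne']; ring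
  set z : ℕ → ℝ := fun k ↦ y (N + k) - α / (d - 1)
  have hz : ∀ k, d ^ k * z 0 ≤ z k := fun k ↦ geom_le (by linarith) k fun i _ ↦ by
    have := hrec (N + i) (by omega)
    simp only [z, ← add_assoc, mul_sub]
    linarith
  refine ⟨z 0 / d ^ N, div_pos (by simpa [z] using hN) (by positivity), fun n hn ↦ ?_⟩
  obtain ⟨k, rfl⟩ := exists_add_of_le hn
  calc z 0 / d ^ N * d ^ (N + k) = d ^ k * z 0 := by
        rw [pow_add]; field_simp
    _ ≤ z k := hz k
    _ ≤ y (N + k) := sub_le_self _ (div_nonneg hα (by linarith))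

theorem exists_le_mul_pow_of_le_mul_add (hd : 1 < d) {β : ℝ} (hβ : 0 ≤ β)
    (hrec : ∀ n ≥ N, y (n + 1) ≤ d * y n + β) :
    ∃ b, ∀ n ≥ N, y n ≤ b * d ^ n := by
  have hfix : d * (β / (d - 1)) = β + β / (d - 1) := by field_simp [(sub_pos.2 hd).ne']; ring
  set z : ℕ → ℝ := fun k ↦ y (N + k) + β / (d - 1)
  have hz : ∀ k, z k ≤ d ^ k * z 0 := fun k ↦ le_geom (by linarith) k fun i _ ↦ by
    have := hrec (N + i) (by omega)
    simp only [z, ← add_assoc, mul_add]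
    linarith
  refine ⟨z 0 / d ^ N, fun n hn ↦ ?_⟩
  obtain ⟨k, rfl⟩ := exists_add_of_le hn
  calc y (N + k) ≤ z k := le_add_of_nonneg_right (div_nonneg hβ (by linarith))
    _ ≤ d ^ k * z 0 := hz k
    _ = z 0 / d ^ N * d ^ (N + k) := by
        rw [pow_add]; field_simp [(zero_lt_one.trans hd).ne']

end GeometricGrowth

theorem mul_neg_log_sub_log_le_neg_log {x y C : ℝ} {d : ℕ} (hx : 0 < x) (hy : 0 < y) (hC : 0 < C)
    (h : y ≤ C * x ^ d) : d * -log x - log C ≤ -log y := by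
  have := log_le_log hy h
  rw [log_mul hC.ne' (by positivity), Real.log_pow] at this
  linarith

theorem neg_log_le_mul_neg_log_sub_log {x y c : ℝ} {d : ℕ} (hx : 0 < x) (hc : 0 < c)
    (h : c * x ^ d ≤ y) : -log y ≤ d * -log x - log c := by
  have := log_le_log (by positivity) h
  rw [log_mul hc.ne' (by positivity), Real.log_pow] at this
  linarith

/-- for `D ≥ 2` and `0 < λ < λ_D`, the sequence `p_h` is nonincreasing,
converges to `0`, and satisfies `exp(−b D^h) ≤ p_h ≤ exp(−a D^h)` for all large `h`. -/
theorem statement_13 (D : ℕ) (hD : 2 ≤ D) (lam : ℝ) (hlam : 0 < lam)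
    (hsub : lam < lambdaD D) :
    (∀ h : ℕ, 1 ≤ h → pseq D lam (h + 1) ≤ pseq D lam h) ∧
    Tendsto (pseq D lam) atTop (nhds 0) ∧
    ∃ (a b : ℝ) (h₀ : ℕ), 0 < a ∧ a ≤ b ∧ 1 ≤ h₀ ∧
      ∀ h : ℕ, h₀ ≤ h →
        Real.exp (-(b * (D : ℝ) ^ h)) ≤ pseq D lam h ∧
        pseq D lam h ≤ Real.exp (-(a * (D : ℝ) ^ h)) := by
  have hd : (1 : ℝ) < D := by exact_mod_cast hD
  have hpos := pseq_pos (D := D) hlam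
  have htend := tendsto_pseq_zero hlam hsub
  set y : ℕ → ℝ := fun h ↦ -log (pseq D lam h)
  have hy : Tendsto y atTop atTop := tendsto_neg_atBot_atTop.comp <|
    tendsto_log_nhdsGT_zero.comp (tendsto_nhdsWithin_iff.2 ⟨htend, .of_forall hpos⟩)
  set C := lam ^ D / (D ! : ℝ)
  set c := exp (-lam) * lam ^ D / (D ! : ℝ)
  have hrec_lower (h : ℕ) (hh : h ≥ 1) : D * y h - |log C| ≤ y (h + 1) :=
    (mul_neg_log_sub_log_le_neg_log (hpos h) (hpos _) (by positivity)
      (pseq_succ_le hlam hh)).trans' (by linarith [le_abs_self (log C)])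
  have hrec_upper (h : ℕ) (hh : h ≥ 1) : y (h + 1) ≤ D * y h + |log c| :=
    (neg_log_le_mul_neg_log_sub_log (hpos h) (by positivity)
      (le_pseq_succ hlam hh)).trans (by linarith [neg_abs_le (log c)])
  obtain ⟨N, hN, hN1⟩ :=
    ((hy.eventually_gt_atTop (|log C| / (D - 1))).and (eventually_ge_atTop 1)).exists
  obtain ⟨a, ha, hlow⟩ := exists_pos_mul_pow_le_of_mul_sub_le hd (abs_nonneg _)
    (fun h hh ↦ hrec_lower h (hN1.trans hh)) hN
  obtain ⟨b, hup⟩ := exists_le_mul_pow_of_le_mul_add hd (abs_nonneg _) (N := N)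
    (fun h hh ↦ hrec_upper h (hN1.trans hh))
  refine ⟨fun h _ ↦ pseq_antitone hlam h.le_succ, htend,
    a, max a b, N, ha, le_max_left a b, hN1, fun h hh ↦ ⟨?_, ?_⟩⟩
  · have : b * D ^ h ≤ max a b * D ^ h := by gcongr; exact le_max_right a b
    rw [← le_log_iff_exp_le (hpos h)]
    linarith [hup h hh]
  · rw [← log_le_iff_le_exp (hpos h)]
    linarith [hlow h hh]

end PlantedStructures
end
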